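/- With W = ⟨X,S,T⟩/⟨S^P X^Q T^R⟩ as above (P having no root among p^n-th roots of unity), suppose B, C ∈ Z_p[X] satisfy BC = X^{p^n} - 1. Then the 'cohomology' quotient H(B,C,W) = ker(B on W)/im(C on W) has order |Z_p/C(1)Z_p| if B(1) = 0, and is trivial if B(1) ≠ 0. In particular |H⁰(G,W)| = p^n and |H¹(G,W)| = 1. -/

import Mathlib

open Polynomial

set_option synthInstance.maxHeartbeats 1000000
set_option maxHeartbeats 1000000

noncomputable section

attribute [local instance] Classical.propDecidable

/-- The ideal `(X^{p^n} - 1)` of `ℤ_p[X]`. -/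
def IgZ (p n : ℕ) [Fact p.Prime] : Ideal (Polynomial ℤ_[p]) :=
  Ideal.span {(X : Polynomial ℤ_[p]) ^ p ^ n - 1}

/-- The group ring `ℤ_p[G] ≅ ℤ_p[X]/(X^{p^n}-1)` for `G = ℤ/p^nℤ`. -/
abbrev GZ (p n : ℕ) [Fact p.Prime] := Polynomial ℤ_[p] ⧸ IgZ p n

/-- The ideal `(σ - 1)` of `ℤ_p[G]`. -/
def I0Z (p n : ℕ) [Fact p.Prime] : Ideal (GZ p n) :=
  Ideal.span {Ideal.Quotient.mk (IgZ p n) ((X : Polynomial ℤ_[p]) - 1)}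

/-- The trivial `ℤ_p[G]`-module `ℤ_p ≅ ℤ_p[G]/(σ - 1)`. -/
abbrev G0Z (p n : ℕ) [Fact p.Prime] := GZ p n ⧸ I0Z p n

/-- The free module `M = ℤ_p·X ⊕ ℤ_p[G]·S ⊕ ℤ_p[G]·T`. -/
abbrev MZ (p n : ℕ) [Fact p.Prime] := G0Z p n × GZ p n × GZ p n

/-- The relation `q = S^P X^Q T^R` (additively: `X`-component `Q`,
`S`-component `P`, `T`-component `R`). -/
def qZ (p n : ℕ) [Fact p.Prime] (P Q R : Polynomial ℤ_[p]) : MZ p n :=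
  (Ideal.Quotient.mk (I0Z p n) (Ideal.Quotient.mk (IgZ p n) Q),
   Ideal.Quotient.mk (IgZ p n) P, Ideal.Quotient.mk (IgZ p n) R)

/-- The formal space `W = ⟨X,S,T⟩/⟨S^P X^Q T^R⟩` over `ℤ_p[G]`. -/
abbrev WZ (p n : ℕ) [Fact p.Prime] (P Q R : Polynomial ℤ_[p]) :=
  MZ p n ⧸ Submodule.span (GZ p n) {qZ p n P Q R}

/-- `H(B,C,W) = ker(B·)/(ker(B·) ∩ im(C·))` for multiplication operators `B, C`. -/
abbrev cohQuot (A : Type*) [CommRing A] (M : Type*) [AddCommGroup M]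
    [Module A M] (a b : A) :=
  LinearMap.ker (LinearMap.lsmul A M a) ⧸
    Submodule.comap (LinearMap.ker (LinearMap.lsmul A M a)).subtype
      (LinearMap.range (LinearMap.lsmul A M b))

/-!
In `A = ℤ_p[X]/(X^{p^n} - 1)` multiplication by `B` and by `C` form an exact complex
`A → A → A → A`, because `ℤ_p[X]` is a domain and `BC = X^{p^n} - 1`; hence `H(B, C, A)` and
`H(C, B, A)` vanish. Since `P` has no common root with `X^{p^n} - 1`, the relation `q` spans a free
submodule `A·q ≅ A` of `M`, and the long exact sequence of `0 → A·q → M → W → 0` identifies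
`H(B, C, W)` with `H(B, C, M)`. In `M = ℤ_p ⊕ A ⊕ A` only the trivial summand contributes, and on it
`B` and `C` act through the augmentation `σ ↦ 1` as `B(1)` and `C(1)`, so
`H(B, C, W) ≅ ker(B(1)) / C(1)ℤ_p`.
-/

section CohQuot

variable {A : Type*} [CommRing A] {M : Type*} [AddCommGroup M] [Module A M]

theorem card_cohQuot_eq_one_of_ker_le_range {a b : A}
    (h : LinearMap.ker (LinearMap.lsmul A M a) ≤ LinearMap.range (LinearMap.lsmul A M b)) :
    Nat.card (cohQuot A M a b) = 1 := by
  have : Subsingleton (cohQuot A M a b) := Submodule.Quotient.subsingleton_iff.mpr <| by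
    rw [eq_top_iff]
    rintro ⟨x, hx⟩ -
    exact h hx
  exact Nat.card_of_subsingleton 0

theorem card_cohQuot_neg_left (a b : A) :
    Nat.card (cohQuot A M (-a) b) = Nat.card (cohQuot A M a b) := by
  rw [cohQuot, map_neg, LinearMap.ker_neg]

theorem card_cohQuot_neg_right (a b : A) :
    Nat.card (cohQuot A M a (-b)) = Nat.card (cohQuot A M a b) := by
  rw [cohQuot, map_neg, LinearMap.range_neg]

theorem card_cohQuot_zero_left (b : A) :
    Nat.card (cohQuot A M 0 b) = Nat.card (M ⧸ LinearMap.range (LinearMap.lsmul A M b)) := by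
  let g := (LinearMap.range (LinearMap.lsmul A M b)).mkQ ∘ₗ
    (LinearMap.ker (LinearMap.lsmul A M 0)).subtype
  have hg : Function.Surjective g := by
    intro y
    obtain ⟨x, rfl⟩ := Submodule.mkQ_surjective _ y
    exact ⟨⟨x, by simp⟩, rfl⟩
  have hgker : LinearMap.ker g = Submodule.comap (LinearMap.ker (LinearMap.lsmul A M 0)).subtype
      (LinearMap.range (LinearMap.lsmul A M b)) := by
    rw [LinearMap.ker_comp, Submodule.ker_mkQ]
  exact Nat.card_congr ((Submodule.quotEquivOfEq _ _ hgker.symm).trans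
    (g.quotKerEquivOfSurjective hg)).toEquiv

section Functoriality

variable {A' N : Type*} [CommRing A'] [AddCommGroup N] [Module A' N]

def cohQuotMap {σ : A →+* A'} (a b : A) (f : M →ₛₗ[σ] N) :
    cohQuot A M a b →ₛₗ[σ] cohQuot A' N (σ a) (σ b) :=
  Submodule.mapQ _ _ (f.restrict fun x hx => by
      simp only [LinearMap.mem_ker, LinearMap.lsmul_apply] at hx ⊢
      rw [← map_smulₛₗ, hx, map_zero]) (by
    rintro ⟨x, hx⟩ ⟨z, hz⟩
    refine ⟨f z, ?_⟩
    simp only [LinearMap.lsmul_apply] at hz ⊢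
    rw [← map_smulₛₗ, hz]
    rfl)

theorem card_cohQuot_eq {σ : A →+* A'} {a b : A} {a' b' : A'} (ha : σ a = a') (hb : σ b = b')
    (f : M →ₛₗ[σ] N)
    (hsurj : ∀ y : N, a' • y = 0 → ∃ x : M, a • x = 0 ∧ ∃ z, f x - y = b' • z)
    (hinj : ∀ x : M, a • x = 0 → ∀ z, f x = b' • z → ∃ z', x = b • z') :
    Nat.card (cohQuot A M a b) = Nat.card (cohQuot A' N a' b') := by
  subst ha hb
  refine Nat.card_congr (Equiv.ofBijective (cohQuotMap a b f) ⟨?_, ?_⟩)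
  · rw [injective_iff_map_eq_zero]
    intro u hu
    obtain ⟨⟨x, hx⟩, rfl⟩ := Submodule.Quotient.mk_surjective _ u
    obtain ⟨z, hz⟩ := (Submodule.Quotient.mk_eq_zero _).mp hu
    obtain ⟨z', hz'⟩ := hinj x hx z hz.symm
    exact (Submodule.Quotient.mk_eq_zero _).mpr ⟨z', hz'.symm⟩
  · intro v
    obtain ⟨⟨y, hy⟩, rfl⟩ := Submodule.Quotient.mk_surjective _ v
    obtain ⟨x, hx, z, hz⟩ := hsurj y hy
    refine ⟨Submodule.Quotient.mk ⟨x, hx⟩, (Submodule.Quotient.eq _).mpr ⟨z, hz.symm⟩⟩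

theorem card_cohQuot_eq_of_bijective {σ : A →+* A'} {a b : A} {a' b' : A'} (ha : σ a = a')
    (hb : σ b = b') {f : M →ₛₗ[σ] N} (hf : Function.Bijective f) :
    Nat.card (cohQuot A M a b) = Nat.card (cohQuot A' N a' b') := by
  subst ha hb
  refine card_cohQuot_eq rfl rfl f (fun y hy => ?_) (fun x _ z hz => ?_)
  · obtain ⟨x, rfl⟩ := hf.2 y
    refine ⟨x, hf.1 ?_, 0, ?_⟩
    · rw [map_smulₛₗ, hy, map_zero]
    · rw [sub_self, smul_zero]
  · obtain ⟨z, rfl⟩ := hf.2 z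
    exact ⟨z, hf.1 (by rw [hz, map_smulₛₗ])⟩

end Functoriality

variable {N : Type*} [AddCommGroup N] [Module A N] {a b : A}

theorem ker_lsmul_le_range_lsmul_prod
    (hM : LinearMap.ker (LinearMap.lsmul A M a) ≤ LinearMap.range (LinearMap.lsmul A M b))
    (hN : LinearMap.ker (LinearMap.lsmul A N a) ≤ LinearMap.range (LinearMap.lsmul A N b)) :
    LinearMap.ker (LinearMap.lsmul A (M × N) a) ≤
      LinearMap.range (LinearMap.lsmul A (M × N) b) := by
  rintro ⟨x, y⟩ h
  obtain ⟨hx, hy⟩ := Prod.mk_eq_zero.mp h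
  obtain ⟨x', rfl⟩ := hM hx
  obtain ⟨y', rfl⟩ := hN hy
  exact ⟨(x', y'), rfl⟩

theorem card_cohQuot_prod_of_ker_le_range
    (hN : LinearMap.ker (LinearMap.lsmul A N a) ≤ LinearMap.range (LinearMap.lsmul A N b)) :
    Nat.card (cohQuot A (M × N) a b) = Nat.card (cohQuot A M a b) := by
  refine card_cohQuot_eq rfl rfl (LinearMap.fst A M N)
    (fun x hx => ⟨(x, 0), by simp [hx], 0, by simp⟩) ?_
  rintro ⟨x, y⟩ hxy z hz
  obtain ⟨y', rfl⟩ := hN (Prod.mk_eq_zero.mp hxy).2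
  exact ⟨(z, y'), Prod.ext hz rfl⟩

theorem card_cohQuot_quotient_span_singleton (hab : a * b = 0)
    (ha : LinearMap.ker (LinearMap.lsmul A A a) ≤ LinearMap.range (LinearMap.lsmul A A b))
    (hb : LinearMap.ker (LinearMap.lsmul A A b) ≤ LinearMap.range (LinearMap.lsmul A A a))
    {q : M} (hq : ∀ r : A, r • q = 0 → r = 0) :
    Nat.card (cohQuot A (M ⧸ A ∙ q) a b) = Nat.card (cohQuot A M a b) := by
  refine (card_cohQuot_eq rfl rfl (Submodule.mkQ _) ?_ ?_).symm
  · intro y hy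
    obtain ⟨x, rfl⟩ := Submodule.mkQ_surjective _ y
    obtain ⟨r, hr⟩ : ∃ r : A, r • q = a • x :=
      Submodule.mem_span_singleton.mp ((Submodule.Quotient.mk_eq_zero _).mp hy)
    obtain ⟨r', hr'⟩ : ∃ r', a * r' = r :=
      hb (hq (b * r) (by rw [mul_smul, hr, smul_smul, mul_comm, hab, zero_smul]))
    refine ⟨x - r' • q, ?_, 0, ?_⟩
    · rw [smul_sub, smul_smul, hr', hr, sub_self]
    · simp [(Submodule.Quotient.mk_eq_zero _).mpr (Submodule.mem_span_singleton_self q)]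
  · intro x hx z hz
    obtain ⟨z, rfl⟩ := Submodule.mkQ_surjective _ z
    obtain ⟨r, hr⟩ : ∃ r : A, r • q = x - b • z :=
      Submodule.mem_span_singleton.mp ((Submodule.Quotient.eq _).mp hz)
    obtain ⟨r', hr'⟩ : ∃ r', b * r' = r :=
      ha (hq (a * r) (by rw [mul_smul, hr, smul_sub, hx, smul_smul, hab, zero_smul, sub_zero]))
    refine ⟨z + r' • q, ?_⟩
    rw [smul_add, smul_smul, hr', hr, add_sub_cancel]

theorem card_cohQuot_self [IsDomain A] (β γ : A) :
    Nat.card (cohQuot A A β γ) = if β = 0 then Nat.card (A ⧸ Ideal.span {γ}) else 1 := by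
  split_ifs with hβ
  · rw [hβ, card_cohQuot_zero_left]
    congr
    ext x
    simp [Ideal.mem_span_singleton', mul_comm, eq_comm]
  · refine card_cohQuot_eq_one_of_ker_le_range fun x hx => ?_
    rw [LinearMap.mem_ker, LinearMap.lsmul_apply, smul_eq_mul, mul_eq_zero] at hx
    rw [hx.resolve_left hβ]
    exact zero_mem _

end CohQuot

theorem ker_lsmul_mk_le_range_lsmul_mk {R : Type*} [CommRing R] [IsDomain R] {I : Ideal R}
    {B C : R} (hI : I = Ideal.span {B * C}) (hB : B ≠ 0) :
    LinearMap.ker (LinearMap.lsmul (R ⧸ I) (R ⧸ I) (Ideal.Quotient.mk I B)) ≤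
      LinearMap.range (LinearMap.lsmul (R ⧸ I) (R ⧸ I) (Ideal.Quotient.mk I C)) := by
  subst hI
  intro x hx
  obtain ⟨g, rfl⟩ := Ideal.Quotient.mk_surjective x
  rw [LinearMap.mem_ker, LinearMap.lsmul_apply, smul_eq_mul, ← map_mul,
    Ideal.Quotient.eq_zero_iff_mem, Ideal.mem_span_singleton] at hx
  obtain ⟨h, rfl⟩ := (mul_dvd_mul_iff_left hB).mp hx
  exact ⟨Ideal.Quotient.mk _ h, by simp⟩

theorem Polynomial.Monic.dvd_of_dvd_mul_of_eval₂_ne_zero {R K : Type*} [CommRing R] [Field K]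
    [IsAlgClosed K] {φ : R →+* K} (hφ : Function.Injective φ) {f P g : R[X]} (hf : f.Monic)
    (hP : ∀ ξ : K, f.eval₂ φ ξ = 0 → P.eval₂ φ ξ ≠ 0) (h : f ∣ g * P) : f ∣ g := by
  have hcop : IsCoprime (f.map φ) (P.map φ) :=
    (isCoprime_iff_aeval_ne_zero_of_isAlgClosed K K _ _).mpr fun ξ => by
      simp only [aeval_def, eval₂_map, Algebra.algebraMap_self, RingHom.id_comp]
      exact or_iff_not_imp_left.mpr fun h0 => hP ξ (not_not.mp h0)
  refine (map_dvd_map φ hφ hf).mp (hcop.dvd_of_dvd_mul_right ?_)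
  simpa only [Polynomial.map_mul] using Polynomial.map_dvd φ h

section GroupRing

variable {p n : ℕ} [Fact p.Prime]

theorem monic_X_pow_sub_one : ((X : ℤ_[p][X]) ^ p ^ n - 1).Monic := by
  simpa using monic_X_pow_sub_C (1 : ℤ_[p]) (pow_ne_zero n (Fact.out : p.Prime).ne_zero)

theorem eq_zero_of_smul_qZ_eq_zero {P : ℤ_[p][X]}
    (hP : ∀ ξ : AlgebraicClosure ℚ_[p], ξ ^ p ^ n = 1 →
      Polynomial.eval₂
        ((algebraMap ℚ_[p] (AlgebraicClosure ℚ_[p])).comp PadicInt.Coe.ringHom) ξ P ≠ 0)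
    (Q R : ℤ_[p][X]) (r : GZ p n) (hr : r • qZ p n P Q R = 0) : r = 0 := by
  obtain ⟨g, rfl⟩ := Ideal.Quotient.mk_surjective r
  have h : Ideal.Quotient.mk (IgZ p n) g * Ideal.Quotient.mk (IgZ p n) P = 0 :=
    congrArg (fun m : MZ p n => m.2.1) hr
  rw [← map_mul, Ideal.Quotient.eq_zero_iff_mem, IgZ, Ideal.mem_span_singleton] at h
  rw [Ideal.Quotient.eq_zero_iff_mem, IgZ, Ideal.mem_span_singleton]
  refine monic_X_pow_sub_one.dvd_of_dvd_mul_of_eval₂_ne_zero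
    (φ := (algebraMap ℚ_[p] _).comp PadicInt.Coe.ringHom)
    ((algebraMap ℚ_[p] _).injective.comp fun _ _ => Subtype.ext) (fun ξ hξ => hP ξ ?_) h
  simpa [sub_eq_zero] using hξ

theorem IgZ_le_span_X_sub_one : IgZ p n ≤ Ideal.span {X - C 1} := by
  rw [IgZ, Ideal.span_singleton_le_span_singleton]
  simpa using sub_dvd_pow_sub_pow (X : ℤ_[p][X]) 1 (p ^ n)

theorem I0Z_eq_map : I0Z p n = (Ideal.span {X - C 1}).map (Ideal.Quotient.mk (IgZ p n)) := by
  rw [I0Z, Ideal.map_span, Set.image_singleton]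
  simp

variable (p n) in
def augmentation : G0Z p n ≃+* ℤ_[p] :=
  (Ideal.quotEquivOfEq I0Z_eq_map).trans <|
    (DoubleQuot.quotQuotEquivQuotOfLE IgZ_le_span_X_sub_one).trans
      (quotientSpanXSubCAlgEquiv 1).toRingEquiv

theorem augmentation_mk_mk (g : ℤ_[p][X]) :
    augmentation p n (Ideal.Quotient.mk (I0Z p n) (Ideal.Quotient.mk (IgZ p n) g)) = g.eval 1 := by
  simp only [augmentation, RingEquiv.trans_apply, Ideal.quotEquivOfEq_mk]
  exact (congrArg _ (DoubleQuot.quotQuotEquivQuotOfLE_quotQuotMk g _)).trans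
    (quotientSpanXSubCAlgEquiv_mk 1 g)

theorem card_cohQuot_G0Z (B C : ℤ_[p][X]) :
    Nat.card (cohQuot (GZ p n) (G0Z p n) (Ideal.Quotient.mk (IgZ p n) B)
      (Ideal.Quotient.mk (IgZ p n) C)) = Nat.card (cohQuot ℤ_[p] ℤ_[p] (B.eval 1) (C.eval 1)) :=
  card_cohQuot_eq_of_bijective
    (σ := (augmentation p n).toRingHom.comp (Ideal.Quotient.mk (I0Z p n)))
    (augmentation_mk_mk (n := n) B) (augmentation_mk_mk (n := n) C)
    (f := { toFun := augmentation p n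
            map_add' := map_add _
            map_smul' := fun a y => by
              rw [Algebra.smul_def a y, Ideal.Quotient.algebraMap_eq, map_mul]
              rfl })
    (augmentation p n).bijective

theorem card_cohQuot_WZ {P : ℤ_[p][X]}
    (hP : ∀ ξ : AlgebraicClosure ℚ_[p], ξ ^ p ^ n = 1 →
      Polynomial.eval₂
        ((algebraMap ℚ_[p] (AlgebraicClosure ℚ_[p])).comp PadicInt.Coe.ringHom) ξ P ≠ 0)
    (Q R : ℤ_[p][X]) {B C : ℤ_[p][X]} (hBC : B * C = X ^ p ^ n - 1) :
    Nat.card (cohQuot (GZ p n) (WZ p n P Q R)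
        (Ideal.Quotient.mk (IgZ p n) B) (Ideal.Quotient.mk (IgZ p n) C))
      = if B.eval 1 = 0 then Nat.card (ℤ_[p] ⧸ Ideal.span {C.eval 1}) else 1 := by
  have hB : B ≠ 0 := left_ne_zero_of_mul (hBC ▸ monic_X_pow_sub_one.ne_zero)
  have hC : C ≠ 0 := right_ne_zero_of_mul (hBC ▸ monic_X_pow_sub_one.ne_zero)
  have hBC_zero : Ideal.Quotient.mk (IgZ p n) B * Ideal.Quotient.mk (IgZ p n) C = 0 := by
    rw [← map_mul, hBC, Ideal.Quotient.eq_zero_iff_mem]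
    exact Ideal.mem_span_singleton_self _
  have hB_exact :=
    ker_lsmul_mk_le_range_lsmul_mk (I := IgZ p n) (B := B) (C := C) (by rw [IgZ, hBC]) hB
  have hC_exact :=
    ker_lsmul_mk_le_range_lsmul_mk (I := IgZ p n) (B := C) (C := B) (by rw [IgZ, mul_comm, hBC]) hC
  rw [card_cohQuot_quotient_span_singleton hBC_zero hB_exact hC_exact
      (eq_zero_of_smul_qZ_eq_zero hP Q R),
    card_cohQuot_prod_of_ker_le_range (M := G0Z p n) (N := GZ p n × GZ p n)
      (ker_lsmul_le_range_lsmul_prod hB_exact hB_exact),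
    card_cohQuot_G0Z, card_cohQuot_self]

end GroupRing

theorem PadicInt.card_quotient_span_prime_pow (p n : ℕ) [Fact p.Prime] :
    Nat.card (ℤ_[p] ⧸ Ideal.span {(p : ℤ_[p]) ^ n}) = p ^ n := by
  rw [← PadicInt.ker_toZModPow, Nat.card_congr (RingHom.quotientKerEquivOfSurjective
    (ZMod.ringHom_surjective (PadicInt.toZModPow n))).toEquiv, Nat.card_zmod]

theorem stmt12_general (p n : ℕ) [Fact p.Prime] (P Q R : Polynomial ℤ_[p])
    (hP : ∀ ξ : AlgebraicClosure ℚ_[p], ξ ^ p ^ n = 1 →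
      Polynomial.eval₂
        ((algebraMap ℚ_[p] (AlgebraicClosure ℚ_[p])).comp PadicInt.Coe.ringHom)
        ξ P ≠ 0)
    (B C : Polynomial ℤ_[p]) (hBC : B * C = (X : Polynomial ℤ_[p]) ^ p ^ n - 1) :
    (Nat.card (cohQuot (GZ p n) (WZ p n P Q R)
        (Ideal.Quotient.mk (IgZ p n) B) (Ideal.Quotient.mk (IgZ p n) C))
      = if B.eval 1 = 0 then Nat.card (ℤ_[p] ⧸ Ideal.span {C.eval 1}) else 1) ∧
    Nat.card (cohQuot (GZ p n) (WZ p n P Q R)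
        (Ideal.Quotient.mk (IgZ p n) (1 - X))
        (Ideal.Quotient.mk (IgZ p n) (∑ k ∈ Finset.range (p ^ n), X ^ k)))
      = p ^ n ∧
    Nat.card (cohQuot (GZ p n) (WZ p n P Q R)
        (Ideal.Quotient.mk (IgZ p n) (∑ k ∈ Finset.range (p ^ n), X ^ k))
        (Ideal.Quotient.mk (IgZ p n) (1 - X)))
      = 1 := by
  have hgeom : (∑ k ∈ Finset.range (p ^ n), X ^ k) * (X - 1) = (X : ℤ_[p][X]) ^ p ^ n - 1 :=
    geom_sum_mul X (p ^ n)
  have hnorm : (∑ k ∈ Finset.range (p ^ n), (X : ℤ_[p][X]) ^ k).eval 1 = (p : ℤ_[p]) ^ n := by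
    simp [eval_finsetSum]
  have hneg : Ideal.Quotient.mk (IgZ p n) (1 - X) = -Ideal.Quotient.mk (IgZ p n) (X - 1) := by
    rw [← map_neg, neg_sub]
  refine ⟨card_cohQuot_WZ hP Q R hBC, ?_, ?_⟩
  · rw [hneg, card_cohQuot_neg_left, card_cohQuot_WZ hP Q R ((mul_comm _ _).trans hgeom),
      if_pos (by simp), hnorm, PadicInt.card_quotient_span_prime_pow]
  · rw [hneg, card_cohQuot_neg_right, card_cohQuot_WZ hP Q R hgeom, hnorm,
      if_neg (pow_ne_zero n (Nat.cast_ne_zero.mpr (Fact.out : p.Prime).ne_zero))]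

/-- If `P(ξ) ≠ 0` for all `p^n`-th roots of unity `ξ` and `B·C = X^{p^n} - 1`, then
`H(B,C,W)` has order `|ℤ_p/C(1)ℤ_p|` when `B(1) = 0` and is trivial when `B(1) ≠ 0`.
In particular (`B = 1-σ, C = N` and `B = N, C = 1-σ`) `|H⁰(G,W)| = p^n` and
`|H¹(G,W)| = 1`. -/
theorem stmt12 (p n : ℕ) [Fact p.Prime] (hn : 1 ≤ n) (P Q R : Polynomial ℤ_[p])
    (hP : ∀ ξ : AlgebraicClosure ℚ_[p], ξ ^ p ^ n = 1 →
      Polynomial.eval₂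
        ((algebraMap ℚ_[p] (AlgebraicClosure ℚ_[p])).comp PadicInt.Coe.ringHom)
        ξ P ≠ 0)
    (B C : Polynomial ℤ_[p]) (hBC : B * C = (X : Polynomial ℤ_[p]) ^ p ^ n - 1) :
    (Nat.card (cohQuot (GZ p n) (WZ p n P Q R)
        (Ideal.Quotient.mk (IgZ p n) B) (Ideal.Quotient.mk (IgZ p n) C))
      = if B.eval 1 = 0 then Nat.card (ℤ_[p] ⧸ Ideal.span {C.eval 1}) else 1) ∧
    Nat.card (cohQuot (GZ p n) (WZ p n P Q R)
        (Ideal.Quotient.mk (IgZ p n) (1 - X))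
        (Ideal.Quotient.mk (IgZ p n) (∑ k ∈ Finset.range (p ^ n), X ^ k)))
      = p ^ n ∧
    Nat.card (cohQuot (GZ p n) (WZ p n P Q R)
        (Ideal.Quotient.mk (IgZ p n) (∑ k ∈ Finset.range (p ^ n), X ^ k))
        (Ideal.Quotient.mk (IgZ p n) (1 - X)))
      = 1 :=
  stmt12_general p n P Q R hP B C hBC

end
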